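/- arXiv:1409.2544 — 10 statements merged into one kernel-verified Lean document; each statement's English description precedes it below -/
import Mathlib

section
/- For any neural code C ⊆ {0,1}^n and any dimension d ≥ 1, there exists a topological space X ⊆ ℝ^d and a collection U = {U_1,...,U_n} of open subsets of X such that C equals the receptive field code C(U), i.e., c ∈ C if and only if the region (⋂_{i ∈ supp(c)} U_i) \ (⋃_{j ∉ supp(c)} U_j) is nonempty. -/
theorem stmt_0 (n : ℕ) (C : Set (Fin n → Bool)) (d : ℕ) (hd : 1 ≤ d) :
    ∃ (X : Set (Fin d → ℝ)) (U : Fin n → Set (Fin d → ℝ)),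
      (∀ i, IsOpen (U i)) ∧ (∀ i, U i ⊆ X) ∧
      ∀ c : Fin n → Bool,
        c ∈ C ↔
          ((X ∩ ⋂ i ∈ {i | c i = true}, U i) \ ⋃ j ∈ {j | c j = false}, U j).Nonempty := by
  classical
  haveI : Encodable (Fin n → Bool) := Fintype.toEncodable _
  set p : (Fin n → Bool) → (Fin d → ℝ) := fun c _ => (Encodable.encode c : ℝ) with hp
  have hpinj : ∀ c c' : Fin n → Bool, dist (p c) (p c') < 1 → c = c' := by
    intro c c' h
    have h0 : dist (p c ⟨0, hd⟩) (p c' ⟨0, hd⟩) ≤ dist (p c) (p c') :=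
      dist_le_pi_dist _ _ _
    have h1 : |((Encodable.encode c : ℝ)) - ((Encodable.encode c' : ℝ))| < 1 := by
      simpa [p, Real.dist_eq] using lt_of_le_of_lt h0 h
    have h2 : |(Encodable.encode c : ℤ) - (Encodable.encode c' : ℤ)| < 1 := by
      exact_mod_cast h1
    have h3 := abs_lt.mp h2
    have h4 : Encodable.encode c = Encodable.encode c' := by omega
    exact Encodable.encode_injective h4
  refine ⟨⋃ c ∈ C, Metric.ball (p c) (1/3),
    fun i => ⋃ c ∈ {c ∈ C | c i = true}, Metric.ball (p c) (1/3), ?_, ?_, ?_⟩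
  · intro i
    exact isOpen_biUnion fun _ _ => Metric.isOpen_ball
  · intro i y hy
    simp only [Set.mem_iUnion] at hy ⊢
    obtain ⟨c, ⟨hc, _⟩, hyc⟩ := hy
    exact ⟨c, hc, hyc⟩
  · intro c
    constructor
    · intro hc
      refine ⟨p c, ⟨⟨?_, ?_⟩, ?_⟩⟩
      · exact Set.mem_biUnion hc (Metric.mem_ball_self (by norm_num))
      · simp only [Set.mem_iInter]
        intro i hi
        exact Set.mem_biUnion ⟨hc, hi⟩ (Metric.mem_ball_self (by norm_num))
      · intro hy
        simp only [Set.mem_iUnion] at hy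
        obtain ⟨j, hj, c', ⟨hc', hc'j⟩, hball⟩ := hy
        have : c = c' := hpinj c c' (by
          have hb := Metric.mem_ball.mp hball
          calc dist (p c) (p c') < 1/3 := hb
            _ < 1 := by norm_num)
        rw [← this] at hc'j
        simp only [Set.mem_setOf_eq] at hj
        rw [hj] at hc'j
        exact Bool.false_ne_true hc'j
    · rintro ⟨y, ⟨⟨hyX, hyI⟩, hyU⟩⟩
      simp only [Set.mem_iUnion] at hyX
      obtain ⟨c₀, hc₀, hyc₀⟩ := hyX
      simp only [Set.mem_iInter] at hyI
      have key : c = c₀ := by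
        funext i
        by_cases h1 : c i = true
        · -- y ∈ U i, so y is near some p c₁ with c₁ i = true, and c₁ = c₀
          have := hyI i h1
          simp only [Set.mem_iUnion] at this
          obtain ⟨c₁, ⟨hc₁, hc₁i⟩, hball⟩ := this
          have : c₀ = c₁ := hpinj c₀ c₁ (by
            calc dist (p c₀) (p c₁) ≤ dist y (p c₀) + dist y (p c₁) :=
                  dist_triangle_left _ _ _
              _ < 1/3 + 1/3 := by
                  exact add_lt_add (Metric.mem_ball.mp hyc₀) (Metric.mem_ball.mp hball)
              _ < 1 := by norm_num)
          rw [this, h1, hc₁i]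
        · -- c i = false; show c₀ i = false. If c₀ i = true then y ∈ U i, contradiction
          have hci : c i = false := (Bool.not_eq_true _).mp h1
          by_contra h2
          have hc₀i : c₀ i = true := by
            cases hc0 : c₀ i
            · exact absurd (hci.trans hc0.symm) h2
            · rfl
          apply hyU
          simp only [Set.mem_iUnion]
          exact ⟨i, hci, c₀, ⟨hc₀, hc₀i⟩, hyc₀⟩
      rw [key]; exact hc₀
end

section
/- The neural code C = {0,1}^3 \ {111, 001} on three neurons cannot be realized as a convex receptive field code: there is no d and no collection of convex open sets U_1, U_2, U_3 ⊆ ℝ^d with C = C(U). -/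
theorem stmt_1 :
    ¬ ∃ (d : ℕ) (X : Set (Fin d → ℝ)) (U : Fin 3 → Set (Fin d → ℝ)),
      (∀ i, IsOpen (U i)) ∧ (∀ i, Convex ℝ (U i)) ∧ (∀ i, U i ⊆ X) ∧
      ∀ c : Fin 3 → Bool,
        (c ≠ ![true, true, true] ∧ c ≠ ![false, false, true]) ↔
          ((X ∩ ⋂ i ∈ {i | c i = true}, U i) \ ⋃ j ∈ {j | c j = false}, U j).Nonempty := by
  rintro ⟨d, X, U, hopen, hconv, hsub, hcode⟩
  classical
  obtain ⟨p, hp⟩ := (hcode ![true, false, true]).mp ⟨by decide, by decide⟩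
  obtain ⟨q, hq⟩ := (hcode ![false, true, true]).mp ⟨by decide, by decide⟩
  have hp0 : p ∈ U 0 := Set.mem_iInter₂.mp hp.1.2 0 (by decide)
  have hp2 : p ∈ U 2 := Set.mem_iInter₂.mp hp.1.2 2 (by decide)
  have hpn1 : p ∉ U 1 := fun h => hp.2 (Set.mem_biUnion (by decide) h)
  have hq1 : q ∈ U 1 := Set.mem_iInter₂.mp hq.1.2 1 (by decide)
  have hq2 : q ∈ U 2 := Set.mem_iInter₂.mp hq.1.2 2 (by decide)
  have key : ∀ x ∈ U 2, (x ∈ U 0 ∨ x ∈ U 1) ∧ ¬ (x ∈ U 0 ∧ x ∈ U 1) := by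
    intro x hx2
    set c : Fin 3 → Bool := fun i => decide (x ∈ U i) with hc
    have hxX : x ∈ X := hsub 2 hx2
    have hmem : x ∈ (X ∩ ⋂ i ∈ {i | c i = true}, U i) \ ⋃ j ∈ {j | c j = false}, U j := by
      constructor
      · refine ⟨hxX, ?_⟩
        refine Set.mem_iInter₂.mpr fun i hi => ?_
        exact of_decide_eq_true hi
      · intro h
        obtain ⟨j, hj, hxj⟩ := Set.mem_iUnion₂.mp h
        exact of_decide_eq_false hj hxj
    have hne := (hcode c).mpr ⟨x, hmem⟩
    constructor
    · by_contra hcon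
      push_neg at hcon
      apply hne.2
      funext i
      fin_cases i <;> simp [hc, hcon.1, hcon.2, hx2]
    · rintro ⟨h0, h1⟩
      apply hne.1
      funext i
      fin_cases i <;> simp [hc, h0, h1, hx2]
  have hseg : segment ℝ p q ⊆ U 2 := (hconv 2).segment_subset hp2 hq2
  have hcover : segment ℝ p q ⊆ U 0 ∪ U 1 := fun z hz => (key z (hseg hz)).1
  obtain ⟨z, hzseg, hz0, hz1⟩ := (convex_segment p q).isPreconnected (U 0) (U 1)
    (hopen 0) (hopen 1) hcover
    ⟨p, left_mem_segment ℝ p q, hp0⟩ ⟨q, right_mem_segment ℝ p q, hq1⟩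
  exact (key z (hseg hzseg)).2 ⟨hz0, hz1⟩
end

section
/- For any ideal J ⊆ 𝔽_q[x_1,...,x_n] over a finite field 𝔽_q, the ideal J + ⟨x_1^q - x_1, ..., x_n^q - x_n⟩ is a radical ideal. -/
theorem stmt_4 (F : Type*) [Field F] [Fintype F] (n : ℕ)
    (J : Ideal (MvPolynomial (Fin n) F)) :
    (J ⊔ Ideal.span (Set.range fun i : Fin n =>
      MvPolynomial.X i ^ Fintype.card F - MvPolynomial.X i)).IsRadical := by
  set q := Fintype.card F with hq
  set I : Ideal (MvPolynomial (Fin n) F) := J ⊔ Ideal.span (Set.range fun i : Fin n =>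
      MvPolynomial.X i ^ q - MvPolynomial.X i) with hI
  have hq1 : 1 < q := Fintype.one_lt_card
  -- key: f ^ q - f ∈ I for every f
  have key : ∀ f : MvPolynomial (Fin n) F, f ^ q - f ∈ I := by
    set p := ringChar F with hpdef
    haveI : Fact (Nat.Prime p) := ⟨CharP.char_is_prime F p⟩
    obtain ⟨k, hp, hk⟩ := FiniteField.card F p
    haveI : CharP (MvPolynomial (Fin n) F) p := inferInstance
    intro f
    induction f using MvPolynomial.induction_on with
    | C a =>
        rw [← MvPolynomial.C_pow, FiniteField.pow_card, sub_self]
        exact I.zero_mem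
    | add f g hf hg =>
        have : (f + g) ^ q = f ^ q + g ^ q := by
          rw [hq, hk]; exact add_pow_char_pow f g p k
        rw [this]
        have : f ^ q + g ^ q - (f + g) = (f ^ q - f) + (g ^ q - g) := by ring
        rw [this]
        exact I.add_mem hf hg
    | mul_X f i hf =>
        have hXi : MvPolynomial.X i ^ q - MvPolynomial.X i ∈ I := by
          exact Ideal.mem_sup_right (Ideal.subset_span ⟨i, rfl⟩)
        have : (f * MvPolynomial.X i) ^ q - f * MvPolynomial.X i =
            f ^ q * (MvPolynomial.X i ^ q - MvPolynomial.X i)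
              + MvPolynomial.X i * (f ^ q - f) := by ring
        rw [this]
        exact I.add_mem (I.mul_mem_left _ hXi) (I.mul_mem_left _ hf)
  rw [Ideal.isRadical_iff_pow_one_lt q hq1]
  intro f hf
  have := I.sub_mem hf (key f)
  simpa using this
end

section
/- Strong Nullstellensatz over a finite field: for any ideal J ⊆ 𝔽_q[x_1,...,x_n], the ideal I(V(J)) of polynomials vanishing on the affine variety V(J) ⊆ 𝔽_q^n equals J + ⟨x_1^q - x_1, ..., x_n^q - x_n⟩. -/
/-! If `f` vanishes on `V(J)`, then at each point `v ∉ V(J)` some `g ∈ J` has `g(v) ≠ 0`, and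
scaling `g` by the indicator polynomial of `v` gives an element of `J` that matches `f` at `v`
and vanishes elsewhere; summing over all points yields `s ∈ J` with `f - s` vanishing on all of
`𝔽_q^n`. Such a polynomial lies in `⟨x_i^q - x_i⟩`: since `x_i^q ≡ x_i`, it is congruent to a
polynomial of degree `< q` in each variable, which vanishes everywhere and hence is zero. -/

open MvPolynomial

theorem pow_succ_eq_pow_mod_succ_of_pow_eq_self {M : Type*} [Monoid M] {y : M} {q : ℕ}
    (hy : y ^ q = y) (e : ℕ) : y ^ (e + 1) = y ^ (e % (q - 1) + 1) := by
  rcases q with _ | q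
  · simp
  have hperiod : ∀ k, y ^ (q * k + 1) = y := by
    intro k
    induction k with
    | zero => simp
    | succ k ih => rw [mul_add_one, add_right_comm, pow_add, ih, ← pow_succ', hy]
  simp only [add_tsub_cancel_right]
  conv_lhs => rw [← Nat.div_add_mod e q, add_right_comm, pow_add, hperiod, ← pow_succ']

namespace MvPolynomial

variable (σ K : Type*) [Field K] [Fintype K]

noncomputable def fieldEquationsIdeal : Ideal (MvPolynomial σ K) :=
  Ideal.span (Set.range fun i => X i ^ Fintype.card K - X i)

variable {σ K}

theorem eval_eq_zero_of_mem_fieldEquationsIdeal {p : MvPolynomial σ K}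
    (hp : p ∈ fieldEquationsIdeal σ K) (v : σ → K) : eval v p = 0 := by
  have : fieldEquationsIdeal σ K ≤ RingHom.ker (eval v) := by
    rw [fieldEquationsIdeal, Ideal.span_le]
    rintro _ ⟨i, rfl⟩
    simp [FiniteField.pow_card]
  exact this hp

theorem exists_mem_restrictDegree_sub_mem_fieldEquationsIdeal (p : MvPolynomial σ K) :
    ∃ r ∈ restrictDegree σ K (Fintype.card K - 1), p - r ∈ fieldEquationsIdeal σ K := by
  set q := Fintype.card K
  set π := Ideal.Quotient.mk (fieldEquationsIdeal σ K)
  have hq : 1 < q := Fintype.one_lt_card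
  -- `X^q = X` makes exponents `≥ 1` periodic modulo `q - 1`
  let reduce : ℕ → ℕ := fun e => if e = 0 then 0 else (e - 1) % (q - 1) + 1
  have hreduce_le (e : ℕ) : reduce e ≤ q - 1 := by
    have := Nat.mod_lt (e - 1) (show 0 < q - 1 by omega)
    simp only [reduce]
    split_ifs <;> omega
  have hpow (i : σ) (e : ℕ) : π (X i) ^ e = π (X i) ^ reduce e := by
    have hX : π (X i) ^ q = π (X i) := by
      rw [← map_pow, Ideal.Quotient.eq]
      exact Ideal.subset_span ⟨i, rfl⟩
    rcases e with _ | e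
    · rfl
    · exact pow_succ_eq_pow_mod_succ_of_pow_eq_self hX e
  induction p using induction_on' with
  | monomial d c =>
    refine ⟨monomial (d.mapRange reduce rfl) c, ?_, ?_⟩
    · refine (mem_restrictDegree _ _ _).2 fun s hs i => ?_
      rw [Finset.mem_singleton.1 (support_monomial_subset hs)]
      exact hreduce_le _
    · rw [← Ideal.Quotient.eq, monomial_eq, monomial_eq, map_mul, map_mul,
        Finsupp.prod_mapRange_index (fun _ => pow_zero _), map_finsuppProd, map_finsuppProd]
      simp only [map_pow]
      exact congrArg _ (Finsupp.prod_congr fun i _ => hpow i _)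
  | add p₁ p₂ ih₁ ih₂ =>
    obtain ⟨r₁, hr₁, h₁⟩ := ih₁
    obtain ⟨r₂, hr₂, h₂⟩ := ih₂
    refine ⟨r₁ + r₂, add_mem hr₁ hr₂, ?_⟩
    rw [add_sub_add_comm]
    exact add_mem h₁ h₂

theorem eq_zero_of_mem_restrictDegree_of_forall_eval_eq_zero [Finite σ] {p : MvPolynomial σ K}
    (hp : p ∈ restrictDegree σ K (Fintype.card K - 1)) (h : ∀ v, eval v p = 0) : p = 0 := by
  refine eq_zero_of_eval_zero_at_prod_finset p (fun _ => Finset.univ) (fun i => ?_)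
    (fun v _ => h v)
  rw [Finset.card_univ, degreeOf_lt_iff Fintype.card_pos]
  exact fun s hs => Nat.lt_of_le_pred Fintype.card_pos ((mem_restrictDegree _ _ _).1 hp s hs i)

theorem mem_fieldEquationsIdeal_iff [Finite σ] {p : MvPolynomial σ K} :
    p ∈ fieldEquationsIdeal σ K ↔ ∀ v, eval v p = 0 := by
  refine ⟨eval_eq_zero_of_mem_fieldEquationsIdeal, fun h => ?_⟩
  obtain ⟨r, hr, hpr⟩ := exists_mem_restrictDegree_sub_mem_fieldEquationsIdeal p
  suffices r = 0 by rwa [this, sub_zero] at hpr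
  refine eq_zero_of_mem_restrictDegree_of_forall_eval_eq_zero hr fun v => ?_
  have := eval_eq_zero_of_mem_fieldEquationsIdeal hpr v
  rwa [map_sub, h v, zero_sub, neg_eq_zero] at this

variable [Fintype σ]

theorem exists_mem_ideal_eval_eq_of_eval_eq_zero (J : Ideal (MvPolynomial σ K)) (v : σ → K)
    {c : K} (hc : (∀ g ∈ J, eval v g = 0) → c = 0) :
    ∃ s ∈ J, eval v s = c ∧ ∀ w ≠ v, eval w s = 0 := by
  by_cases hv : ∀ g ∈ J, eval v g = 0
  · exact ⟨0, J.zero_mem, by simp [hc hv], fun w _ => map_zero _⟩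
  push Not at hv
  obtain ⟨g, hgJ, hgv⟩ := hv
  refine ⟨C (c / eval v g) * indicator v * g, J.mul_mem_left _ hgJ, ?_, fun w hw => ?_⟩
  · simp [eval_indicator_apply_eq_one, hgv]
  · simp [eval_indicator_apply_eq_zero w v hw]

theorem exists_mem_ideal_eval_eq (J : Ideal (MvPolynomial σ K)) (φ : (σ → K) → K)
    (hφ : ∀ v, (∀ g ∈ J, eval v g = 0) → φ v = 0) :
    ∃ s ∈ J, ∀ w, eval w s = φ w := by
  classical
  choose s hsJ hsv hs using fun v => exists_mem_ideal_eval_eq_of_eval_eq_zero J v (hφ v)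
  refine ⟨∑ v, s v, J.sum_mem fun v _ => hsJ v, fun w => ?_⟩
  rw [map_sum, Finset.sum_eq_single_of_mem w (Finset.mem_univ w) fun v _ hvw => hs v w hvw.symm,
    hsv]

end MvPolynomial

theorem stmt_5 (F : Type*) [Field F] [Fintype F] (n : ℕ)
    (J : Ideal (MvPolynomial (Fin n) F)) (f : MvPolynomial (Fin n) F) :
    (∀ v : Fin n → F, (∀ g ∈ J, MvPolynomial.eval v g = 0) → MvPolynomial.eval v f = 0) ↔
      f ∈ J ⊔ Ideal.span (Set.range fun i : Fin n =>
        MvPolynomial.X i ^ Fintype.card F - MvPolynomial.X i) := by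
  change _ ↔ f ∈ J ⊔ fieldEquationsIdeal (Fin n) F
  constructor
  · intro hf
    obtain ⟨s, hsJ, hs⟩ := exists_mem_ideal_eval_eq J (fun v => eval v f) hf
    have hfs : f - s ∈ fieldEquationsIdeal (Fin n) F :=
      mem_fieldEquationsIdeal_iff.2 fun v => by rw [map_sub, hs, sub_self]
    exact Submodule.mem_sup.2 ⟨s, hsJ, f - s, hfs, add_sub_cancel s f⟩
  · intro hf v hv
    obtain ⟨g, hgJ, h, hh, rfl⟩ := Submodule.mem_sup.1 hf
    rw [map_add, hv g hgJ, mem_fieldEquationsIdeal_iff.1 hh v, add_zero]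
end

section
/- Let C ⊆ 𝔽₂^n be a neural code. Then I_C = J_C + B, where I_C is the vanishing ideal of C, J_C = ⟨ρ_v : v ∉ C⟩ is the neural ideal generated by the characteristic functions of non-codewords, and B = ⟨x_i(1 - x_i) : i ∈ [n]⟩ is the ideal of Boolean relations. -/
/-- The characteristic polynomial `ρ_v` of a word `v ∈ 𝔽₂ⁿ`. -/
noncomputable def rho {n : ℕ} (v : Fin n → ZMod 2) : MvPolynomial (Fin n) (ZMod 2) :=
  ∏ i : Fin n, if v i = 1 then MvPolynomial.X i else 1 - MvPolynomial.X i

open MvPolynomial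

lemma zmod2_factor : ∀ a b : ZMod 2, a ≠ b → (if b = 1 then a else 1 - a) = 0 := by decide

lemma zmod2_mul : ∀ a : ZMod 2, a * (1 - a) = 0 := by decide

lemma zmod2_ne_one : ∀ a : ZMod 2, a ≠ 1 → a = 0 := by decide

lemma eval_rho {n : ℕ} (c v : Fin n → ZMod 2) :
    eval c (rho v) = ∏ i : Fin n, (if v i = 1 then c i else 1 - c i) := by
  simp [rho, apply_ite (eval c)]

lemma eval_rho_ne {n : ℕ} {c v : Fin n → ZMod 2} (h : c ≠ v) : eval c (rho v) = 0 := by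
  obtain ⟨i, hi⟩ := Function.ne_iff.mp h
  rw [eval_rho]
  exact Finset.prod_eq_zero (Finset.mem_univ i) (zmod2_factor _ _ hi)

lemma sum_rho {n : ℕ} : (∑ v : Fin n → ZMod 2, rho v) = 1 := by
  classical
  have huniv : (Finset.univ : Finset (Fin n → ZMod 2))
      = Fintype.piFinset (fun _ : Fin n => (Finset.univ : Finset (ZMod 2))) := by
    simp
  have h2 : (Finset.univ : Finset (ZMod 2)) = {0, 1} := by decide
  rw [show (∑ v : Fin n → ZMod 2, rho v)
      = ∑ v ∈ Fintype.piFinset (fun _ : Fin n => (Finset.univ : Finset (ZMod 2))),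
          ∏ i : Fin n, (if v i = 1 then (X i : MvPolynomial (Fin n) (ZMod 2)) else 1 - X i) by
    rw [← huniv]; rfl]
  rw [← Finset.prod_univ_sum (fun _ : Fin n => (Finset.univ : Finset (ZMod 2)))
    (fun i b => if b = 1 then (X i : MvPolynomial (Fin n) (ZMod 2)) else 1 - X i)]
  have : ∀ i : Fin n, (∑ b : ZMod 2,
      (if b = 1 then (X i : MvPolynomial (Fin n) (ZMod 2)) else 1 - X i)) = 1 := by
    intro i
    rw [h2, Finset.sum_insert (by decide), Finset.sum_singleton]
    norm_num
  simp [this]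

lemma rho_mul_X {n : ℕ} (v : Fin n → ZMod 2) (i : Fin n) :
    rho v * X i - MvPolynomial.C (v i) * rho v ∈
      Ideal.span (Set.range fun i : Fin n =>
        (X i : MvPolynomial (Fin n) (ZMod 2)) * (1 - X i)) := by
  classical
  have hgen : (X i : MvPolynomial (Fin n) (ZMod 2)) * (1 - X i) ∈
      Ideal.span (Set.range fun i : Fin n =>
        (X i : MvPolynomial (Fin n) (ZMod 2)) * (1 - X i)) :=
    Ideal.subset_span ⟨i, rfl⟩
  set R : MvPolynomial (Fin n) (ZMod 2) :=
    ∏ j ∈ Finset.univ.erase i, (if v j = 1 then X j else 1 - X j) with hR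
  by_cases hv : v i = 1
  · have h : rho v = X i * R := by
      rw [rho, ← Finset.mul_prod_erase _ _ (Finset.mem_univ i), if_pos hv]
    rw [hv, h]
    have heq : X i * R * X i - MvPolynomial.C (1 : ZMod 2) * (X i * R)
        = -(R * (X i * (1 - X i))) := by
      rw [map_one]; ring
    rw [heq]
    exact neg_mem (Ideal.mul_mem_left _ _ hgen)
  · have hv0 : v i = 0 := zmod2_ne_one _ hv
    have h : rho v = (1 - X i) * R := by
      rw [rho, ← Finset.mul_prod_erase _ _ (Finset.mem_univ i), if_neg hv]
    rw [hv0, h]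
    have heq : (1 - X i) * R * X i - MvPolynomial.C (0 : ZMod 2) * ((1 - X i) * R)
        = R * (X i * (1 - X i)) := by
      rw [map_zero]; ring
    rw [heq]
    exact Ideal.mul_mem_left _ _ hgen

lemma sub_F_mem {n : ℕ} (f : MvPolynomial (Fin n) (ZMod 2)) :
    f - ∑ v : Fin n → ZMod 2, MvPolynomial.C (eval v f) * rho v ∈
      Ideal.span (Set.range fun i : Fin n =>
        (X i : MvPolynomial (Fin n) (ZMod 2)) * (1 - X i)) := by
  classical
  induction f using MvPolynomial.induction_on with
  | C a =>
    have : (∑ v : Fin n → ZMod 2, MvPolynomial.C (eval v (MvPolynomial.C a)) * rho v)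
        = MvPolynomial.C a := by
      simp only [eval_C, ← Finset.mul_sum, sum_rho, mul_one]
    rw [this, sub_self]
    exact zero_mem _
  | add p q hp hq =>
    have heq : (p + q) - ∑ v : Fin n → ZMod 2, MvPolynomial.C (eval v (p + q)) * rho v
        = (p - ∑ v : Fin n → ZMod 2, MvPolynomial.C (eval v p) * rho v)
          + (q - ∑ v : Fin n → ZMod 2, MvPolynomial.C (eval v q) * rho v) := by
      simp only [map_add, add_mul, Finset.sum_add_distrib]
      ring
    rw [heq]
    exact add_mem hp hq
  | mul_X p i hp =>
    have h1 : (p - ∑ v : Fin n → ZMod 2, MvPolynomial.C (eval v p) * rho v) * X i ∈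
        Ideal.span (Set.range fun i : Fin n =>
          (X i : MvPolynomial (Fin n) (ZMod 2)) * (1 - X i)) :=
      Ideal.mul_mem_right _ _ hp
    have h2 : (∑ v : Fin n → ZMod 2,
        MvPolynomial.C (eval v p) * (rho v * X i - MvPolynomial.C (v i) * rho v)) ∈
        Ideal.span (Set.range fun i : Fin n =>
          (X i : MvPolynomial (Fin n) (ZMod 2)) * (1 - X i)) :=
      Submodule.sum_mem _ fun v _ => Ideal.mul_mem_left _ _ (rho_mul_X v i)
    have heq : p * X i - ∑ v : Fin n → ZMod 2, MvPolynomial.C (eval v (p * X i)) * rho v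
        = (p - ∑ v : Fin n → ZMod 2, MvPolynomial.C (eval v p) * rho v) * X i
          + ∑ v : Fin n → ZMod 2,
              MvPolynomial.C (eval v p) * (rho v * X i - MvPolynomial.C (v i) * rho v) := by
      simp only [eval_mul, eval_X, map_mul, mul_sub, Finset.sum_sub_distrib, sub_mul,
        Finset.sum_mul, mul_assoc]
      ring
    rw [heq]
    exact add_mem h1 h2

theorem stmt_7 (n : ℕ) (C : Set (Fin n → ZMod 2)) (f : MvPolynomial (Fin n) (ZMod 2)) :
    (∀ c ∈ C, MvPolynomial.eval c f = 0) ↔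
      f ∈ Ideal.span (rho '' {v | v ∉ C}) ⊔
          Ideal.span (Set.range fun i : Fin n =>
            MvPolynomial.X i * (1 - MvPolynomial.X i)) := by
  classical
  constructor
  · intro h
    have hF : (∑ v : Fin n → ZMod 2, MvPolynomial.C (eval v f) * rho v) ∈
        Ideal.span (rho '' {v | v ∉ C}) := by
      refine Submodule.sum_mem _ fun v _ => ?_
      by_cases hv : v ∈ C
      · rw [h v hv]; simp
      · exact Ideal.mul_mem_left _ _ (Ideal.subset_span ⟨v, hv, rfl⟩)
    have hB := sub_F_mem f
    have heq : f = (∑ v : Fin n → ZMod 2, MvPolynomial.C (eval v f) * rho v)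
        + (f - ∑ v : Fin n → ZMod 2, MvPolynomial.C (eval v f) * rho v) := by ring
    rw [heq]
    exact add_mem (Ideal.mem_sup_left hF) (Ideal.mem_sup_right hB)
  · intro h c hc
    have hker : Ideal.span (rho '' {v | v ∉ C}) ⊔
        Ideal.span (Set.range fun i : Fin n =>
          (MvPolynomial.X i : MvPolynomial (Fin n) (ZMod 2)) * (1 - MvPolynomial.X i)) ≤
        RingHom.ker (eval c) := by
      refine sup_le (Ideal.span_le.mpr ?_) (Ideal.span_le.mpr ?_)
      · rintro _ ⟨v, hv, rfl⟩
        simp only [SetLike.mem_coe, RingHom.mem_ker]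
        exact eval_rho_ne (fun he => hv (he ▸ hc))
      · rintro _ ⟨i, rfl⟩
        simp only [SetLike.mem_coe, RingHom.mem_ker, eval_mul, eval_X, map_sub, map_one]
        exact zmod2_mul _
    exact hker h
end

section
/- Let C = C(U) be the receptive field code of a collection of sets U = {U_1,...,U_n} in a space X. Then for subsets σ, τ ⊆ [n], the polynomial x_σ · ∏_{i ∈ τ}(1 - x_i) lies in the vanishing ideal I_C if and only if U_σ ⊆ ⋃_{i ∈ τ} U_i. -/
theorem stmt_10 (n : ℕ) {Ω : Type*} (X : Set Ω) (U : Fin n → Set Ω)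
    (hU : ∀ i, U i ⊆ X) (C : Set (Fin n → ZMod 2))
    (hC : ∀ c : Fin n → ZMod 2, c ∈ C ↔
      ((X ∩ ⋂ i ∈ {i | c i = 1}, U i) \ ⋃ j ∈ {j | c j ≠ 1}, U j).Nonempty)
    (σ τ : Finset (Fin n)) :
    (∀ c ∈ C, MvPolynomial.eval c
        ((∏ i ∈ σ, MvPolynomial.X i) *
          ∏ i ∈ τ, (1 - MvPolynomial.X i) : MvPolynomial (Fin n) (ZMod 2)) = 0) ↔
      (X ∩ ⋂ i ∈ σ, U i) ⊆ ⋃ i ∈ τ, U i := by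
  classical
  have hzm : ∀ x : ZMod 2, x ≠ 0 ↔ x = 1 := by decide
  have hzm' : ∀ x : ZMod 2, (1 : ZMod 2) - x ≠ 0 ↔ x = 0 := by decide
  have heval : ∀ c : Fin n → ZMod 2,
      MvPolynomial.eval c
        ((∏ i ∈ σ, MvPolynomial.X i) *
          ∏ i ∈ τ, (1 - MvPolynomial.X i) : MvPolynomial (Fin n) (ZMod 2)) =
        (∏ i ∈ σ, c i) * ∏ i ∈ τ, (1 - c i) := by
    intro c
    simp [map_prod]
  constructor
  · intro h p hp
    by_contra hnot
    set c : Fin n → ZMod 2 := fun i => if p ∈ U i then 1 else 0 with hc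
    have hcC : c ∈ C := by
      rw [hC]
      refine ⟨p, ⟨⟨hp.1, ?_⟩, ?_⟩⟩
      · simp only [Set.mem_iInter]
        intro i hi
        simp only [hc, Set.mem_setOf_eq] at hi
        by_contra hpu
        simp [hpu] at hi
      · simp only [Set.mem_iUnion]
        rintro ⟨j, hj, hpj⟩
        simp only [hc, Set.mem_setOf_eq] at hj
        exact hj (by simp [hpj])
    have := h c hcC
    rw [heval] at this
    have h1 : (∏ i ∈ σ, c i) = 1 := by
      apply Finset.prod_eq_one
      intro i hi
      have : p ∈ U i := Set.mem_iInter₂.mp hp.2 i hi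
      simp [hc, this]
    have h2 : (∏ i ∈ τ, (1 - c i)) = 1 := by
      apply Finset.prod_eq_one
      intro i hi
      have : p ∉ U i := fun hpi => hnot (Set.mem_iUnion₂.mpr ⟨i, hi, hpi⟩)
      simp [hc, this]
    rw [h1, h2] at this
    exact one_ne_zero ((one_mul (1 : ZMod 2)) ▸ this)
  · intro h c hcC
    rw [heval]
    by_contra hne
    have hσ : ∀ i ∈ σ, c i = 1 := by
      intro i hi
      have := (Finset.prod_ne_zero_iff.mp (left_ne_zero_of_mul hne)) i hi
      exact (hzm _).mp this
    have hτ : ∀ i ∈ τ, c i = 0 := by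
      intro i hi
      have := (Finset.prod_ne_zero_iff.mp (right_ne_zero_of_mul hne)) i hi
      exact (hzm' _).mp this
    obtain ⟨p, hp⟩ := (hC c).mp hcC
    have hpX : p ∈ X ∩ ⋂ i ∈ σ, U i := by
      refine ⟨hp.1.1, Set.mem_iInter₂.mpr fun i hi => ?_⟩
      have := hp.1.2
      simp only [Set.mem_iInter, Set.mem_setOf_eq] at this
      exact this i (hσ i hi)
    obtain ⟨i, hi, hpi⟩ := Set.mem_iUnion₂.mp (h hpX)
    apply hp.2
    refine Set.mem_iUnion₂.mpr ⟨i, ?_, hpi⟩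
    simp [Set.mem_setOf_eq, hτ i hi]
end

section
/- If pseudo-monomials satisfy y_{i_1} ⋯ y_{i_m} ∈ ⟨z_{j_1}, ..., z_{j_ℓ}⟩ in 𝔽₂[x_1,...,x_n], where each y_i, z_j ∈ {x_i, 1 - x_i} (respectively {x_j, 1-x_j}), the indices i_1,...,i_m are distinct, and the indices j_1,...,j_ℓ are distinct, then y_{i_k} = z_{j_r} for some k and r. -/
open MvPolynomial

theorem stmt_11 (n m ℓ : ℕ) (ι : Fin m → Fin n) (κ : Fin ℓ → Fin n)
    (hι : Function.Injective ι) (hκ : Function.Injective κ)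
    (y : Fin m → MvPolynomial (Fin n) (ZMod 2))
    (z : Fin ℓ → MvPolynomial (Fin n) (ZMod 2))
    (hy : ∀ k, y k = MvPolynomial.X (ι k) ∨ y k = 1 - MvPolynomial.X (ι k))
    (hz : ∀ r, z r = MvPolynomial.X (κ r) ∨ z r = 1 - MvPolynomial.X (κ r))
    (hmem : (∏ k, y k) ∈ Ideal.span (Set.range z)) :
    ∃ k r, y k = z r := by
  by_contra hcon
  push_neg at hcon
  classical
  have hXne : ∀ i : Fin n, (X i : MvPolynomial (Fin n) (ZMod 2)) ≠ 1 - X i := by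
    intro i h
    have := congrArg (eval (fun _ => (0 : ZMod 2))) h
    simp at this
  set σ : Fin n → ZMod 2 := fun i =>
    if h : ∃ r, κ r = i then (if z h.choose = X i then 0 else 1)
    else if h' : ∃ k, ι k = i then (if y h'.choose = X i then 1 else 0) else 0
    with hσ
  have hz0 : ∀ r, eval σ (z r) = 0 := by
    intro r
    have hex : ∃ r', κ r' = κ r := ⟨r, rfl⟩
    have hchoose : hex.choose = r := hκ hex.choose_spec
    rcases hz r with h | h
    · have hs : σ (κ r) = 0 := by
        simp only [hσ]
        rw [dif_pos hex, hchoose, if_pos h]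
      rw [h]; simp [hs]
    · have hne : z r ≠ X (κ r) := by
        intro hh; rw [h] at hh; exact hXne _ hh.symm
      have hs : σ (κ r) = 1 := by
        simp only [hσ]
        rw [dif_pos hex, hchoose, if_neg hne]
      rw [h]; simp [hs]
  have hy1 : ∀ k, eval σ (y k) = 1 := by
    intro k
    by_cases hc : ∃ r, κ r = ι k
    · have hr : κ hc.choose = ι k := hc.choose_spec
      have hs : σ (ι k) = if z hc.choose = X (ι k) then 0 else 1 := by
        simp only [hσ]; rw [dif_pos hc]
      rcases hz hc.choose with hzr | hzr <;> rw [hr] at hzr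
      · have hyk : y k = 1 - X (ι k) := by
          rcases hy k with h | h
          · exact absurd (h.trans hzr.symm) (hcon k hc.choose)
          · exact h
        rw [hyk]
        rw [if_pos hzr] at hs
        simp [hs]
      · have hne : z hc.choose ≠ X (ι k) := by
          intro hh; rw [hzr] at hh; exact hXne _ hh.symm
        have hyk : y k = X (ι k) := by
          rcases hy k with h | h
          · exact h
          · exact absurd (h.trans hzr.symm) (hcon k hc.choose)
        rw [hyk]
        rw [if_neg hne] at hs
        simp [hs]
    · have hex : ∃ k', ι k' = ι k := ⟨k, rfl⟩
      have hchoose : hex.choose = k := hι hex.choose_spec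
      have hs : σ (ι k) = if y k = X (ι k) then 1 else 0 := by
        simp only [hσ]; rw [dif_neg hc, dif_pos hex, hchoose]
      rcases hy k with h | h
      · rw [if_pos h] at hs; rw [h]; simp [hs]
      · have hne : y k ≠ X (ι k) := by
          intro hh; rw [h] at hh; exact hXne _ hh.symm
        rw [if_neg hne] at hs; rw [h]; simp [hs]
  have hker : Ideal.span (Set.range z) ≤ RingHom.ker (eval σ) := by
    rw [Ideal.span_le]
    rintro _ ⟨r, rfl⟩
    exact hz0 r
  have h0 : eval σ (∏ k, y k) = 0 := hker hmem
  rw [map_prod] at h0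
  simp [hy1] at h0
end

section
/- Let J ⊆ 𝔽₂[x_1,...,x_n] be a pseudo-monomial ideal and z ∈ {x_i, 1 - x_i} for some i. If f is a pseudo-monomial with f ∈ ⟨J, z⟩, then f ∈ J, or f ∈ ⟨z⟩, or (1 - z)·f ∈ J. -/
/-- A pseudo-monomial in `𝔽₂[x₁,…,xₙ]`: a product of linear terms `xᵢ` or `1 - xᵢ`
over a set of distinct indices. -/
def IsPseudoMonomial {n : ℕ} (f : MvPolynomial (Fin n) (ZMod 2)) : Prop :=
  ∃ (σ : Finset (Fin n)) (z : Fin n → MvPolynomial (Fin n) (ZMod 2)),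
    (∀ i ∈ σ, z i = MvPolynomial.X i ∨ z i = 1 - MvPolynomial.X i) ∧ f = ∏ i ∈ σ, z i

/-- A pseudo-monomial ideal: an ideal generated by finitely many pseudo-monomials. -/
def IsPseudoMonomialIdeal {n : ℕ} (J : Ideal (MvPolynomial (Fin n) (ZMod 2))) : Prop :=
  ∃ G : Finset (MvPolynomial (Fin n) (ZMod 2)),
    (∀ g ∈ G, IsPseudoMonomial g) ∧ J = Ideal.span (G : Set (MvPolynomial (Fin n) (ZMod 2)))

theorem stmt_12 (n : ℕ) (J : Ideal (MvPolynomial (Fin n) (ZMod 2)))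
    (hJ : IsPseudoMonomialIdeal J) (i : Fin n) (z : MvPolynomial (Fin n) (ZMod 2))
    (hz : z = MvPolynomial.X i ∨ z = 1 - MvPolynomial.X i)
    (f : MvPolynomial (Fin n) (ZMod 2)) (hf : IsPseudoMonomial f)
    (hmem : f ∈ J ⊔ Ideal.span {z}) :
    f ∈ J ∨ f ∈ Ideal.span {z} ∨ (1 - z) * f ∈ J := by
  classical
  obtain ⟨G, hG, rfl⟩ := hJ
  have h2 : (2 : MvPolynomial (Fin n) (ZMod 2)) = 0 := by
    exact_mod_cast CharP.cast_eq_zero (MvPolynomial (Fin n) (ZMod 2)) 2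
  set u : Fin n → MvPolynomial (Fin n) (ZMod 2) :=
    fun j => if j = i then MvPolynomial.X i - z else MvPolynomial.X j with hu
  set φ : MvPolynomial (Fin n) (ZMod 2) →ₐ[ZMod 2] MvPolynomial (Fin n) (ZMod 2) :=
    MvPolynomial.aeval u with hφ
  have hφz : φ z = 0 := by
    rcases hz with h | h
    · rw [h]
      simp only [hφ, MvPolynomial.aeval_X, hu, if_pos rfl, if_true, eq_self_iff_true]
      rw [h, sub_self]
    · rw [h]
      simp only [hφ, map_sub, map_one, MvPolynomial.aeval_X, hu, if_pos rfl, if_true, eq_self_iff_true]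
      rw [h]
      linear_combination (1 - MvPolynomial.X i) * h2
  have hφX : ∀ j : Fin n, j ≠ i → φ (MvPolynomial.X j) = MvPolynomial.X j := by
    intro j hj
    simp [hφ, hu, MvPolynomial.aeval_X, if_neg hj]
  -- classification of the linear factor at index i
  have hwcase : ∀ w : MvPolynomial (Fin n) (ZMod 2), (w = MvPolynomial.X i ∨ w = 1 - MvPolynomial.X i) →
      (w = z ∧ φ w = 0) ∨ (w = 1 - z ∧ φ w = 1) := by
    intro w hw
    rcases hz with h | h <;> rcases hw with h' | h'
    · exact Or.inl ⟨h'.trans h.symm, h' ▸ (h ▸ hφz)⟩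
    · refine Or.inr ⟨by rw [h', h], ?_⟩
      rw [h']
      simp only [hφ, map_sub, map_one, MvPolynomial.aeval_X, hu, if_pos rfl, if_true, eq_self_iff_true]
      rw [h]
      ring
    · refine Or.inr ⟨by rw [h', h]; ring, ?_⟩
      rw [h']
      simp only [hφ, map_sub, map_one, MvPolynomial.aeval_X, hu, if_pos rfl, if_true, eq_self_iff_true]
      rw [h]
      linear_combination (MvPolynomial.X i - 1) * h2
    · exact Or.inl ⟨h'.trans h.symm, h' ▸ (h ▸ hφz)⟩
  -- φ fixes pseudo-monomials avoiding index i
  have hfix : ∀ (τ : Finset (Fin n)) (w : Fin n → MvPolynomial (Fin n) (ZMod 2)),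
      (∀ j ∈ τ, w j = MvPolynomial.X j ∨ w j = 1 - MvPolynomial.X j) → i ∉ τ →
      φ (∏ j ∈ τ, w j) = ∏ j ∈ τ, w j := by
    intro τ w hw hi
    rw [map_prod]
    refine Finset.prod_congr rfl fun j hj => ?_
    have hji : j ≠ i := fun h => hi (h ▸ hj)
    rcases hw j hj with h | h <;> rw [h]
    · exact hφX j hji
    · rw [map_sub, map_one, hφX j hji]
  -- key property on generators, then on the span
  have hgen : ∀ g ∈ Ideal.span (G : Set (MvPolynomial (Fin n) (ZMod 2))), (1 - z) * φ g ∈ Ideal.span (G : Set (MvPolynomial (Fin n) (ZMod 2))) := by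
    intro g hg
    refine Submodule.span_induction (p := fun x _ => (1 - z) * φ x ∈ Ideal.span (G : Set (MvPolynomial (Fin n) (ZMod 2))))
      ?_ ?_ ?_ ?_ hg
    · intro g hg
      obtain ⟨τ, w, hw, rfl⟩ := hG g hg
      by_cases hi : i ∈ τ
      · rw [← Finset.mul_prod_erase τ w hi, map_mul]
        rcases hwcase (w i) (hw i hi) with ⟨hwz, hφw⟩ | ⟨hwz, hφw⟩
        · rw [hφw]; simp
        · rw [hφw, one_mul,
            hfix (τ.erase i) w (fun j hj => hw j (Finset.mem_of_mem_erase hj))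
              (Finset.notMem_erase i τ), ← hwz, Finset.mul_prod_erase τ w hi]
          exact Ideal.subset_span hg
      · rw [hfix τ w hw hi]
        exact Ideal.mul_mem_left _ _ (Ideal.subset_span hg)
    · simp
    · intro x y _ _ hx hy
      rw [map_add, mul_add]
      exact Ideal.add_mem _ hx hy
    · intro c x _ hx
      rw [smul_eq_mul, map_mul, mul_left_comm]
      exact Ideal.mul_mem_left _ _ hx
  -- decompose f
  obtain ⟨g, hg, w, hw, hsum⟩ := Submodule.mem_sup.mp hmem
  obtain ⟨h, hh⟩ := Ideal.mem_span_singleton'.mp hw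
  have hφf : φ f = φ g := by
    rw [← hsum, map_add, ← hh, map_mul, hφz, mul_zero, add_zero]
  obtain ⟨σ, zf, hzf, rfl⟩ := hf
  by_cases hi : i ∈ σ
  · rcases hwcase (zf i) (hzf i hi) with ⟨hwz, hφw⟩ | ⟨hwz, hφw⟩
    · refine Or.inr (Or.inl (Ideal.mem_span_singleton.mpr ?_))
      exact ⟨∏ j ∈ σ.erase i, zf j, by rw [← hwz, Finset.mul_prod_erase σ zf hi]⟩
    · refine Or.inl ?_
      have hm : φ (∏ j ∈ σ, zf j) = ∏ j ∈ σ.erase i, zf j := by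
        rw [← Finset.mul_prod_erase σ zf hi, map_mul, hφw, one_mul]
        exact hfix (σ.erase i) zf (fun j hj => hzf j (Finset.mem_of_mem_erase hj))
          (Finset.notMem_erase i σ)
      have : ∏ j ∈ σ, zf j = (1 - z) * φ (∏ j ∈ σ, zf j) := by
        rw [hm, ← hwz, Finset.mul_prod_erase σ zf hi]
      rw [this, hφf]
      exact hgen g hg
  · refine Or.inr (Or.inr ?_)
    have : (1 - z) * ∏ j ∈ σ, zf j = (1 - z) * φ g := by
      rw [← hφf, hfix σ zf hzf hi]
    rw [this]
    exact hgen g hg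
end

section
/- Let J ⊆ 𝔽₂[x_1,...,x_n] be a pseudo-monomial ideal and let ∏_{i ∈ σ} z_i be a pseudo-monomial with z_i ∈ {x_i, 1 - x_i} for each i ∈ σ. Then ⟨J, ∏_{i ∈ σ} z_i⟩ = ⋂_{i ∈ σ} ⟨J, z_i⟩. -/
/-!
Let `z = X j - c` be one factor of the pseudo-monomial, `b` the product of the others, and `φ` the
substitution `X j ↦ c`, a retraction onto the polynomials free of `X j` with kernel `⟨z⟩`.
If `z q = w + h b` with `w ∈ J`, applying `φ` gives `φ w + φ h · b = 0`, so
`z q = (w - (1 - z) φ w) + (h - (1 - z) φ h) b`. The second coefficient is `≡ 0` mod `z`, and the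
first term stays in `J` because `(1 - z) φ g` is `0` or a multiple of `g` for every
pseudo-monomial `g`. Hence `⟨J, z b⟩ = ⟨J, z⟩ ∩ ⟨J, b⟩`, and induction on `σ` finishes.
-/

open Ideal in
theorem Ideal.sup_span_singleton_mul_eq_inf {R : Type*} [CommRing R] (I : Ideal R) (φ : R →+* R)
    {z b : R} (hz : φ z = 0) (hφ : ∀ p, p - φ p ∈ span {z}) (hb : φ b = b)
    (hI : ∀ g ∈ I, (1 - z) * φ g ∈ I) :
    I ⊔ span {z * b} = (I ⊔ span {z}) ⊓ (I ⊔ span {b}) := by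
  refine le_antisymm (sup_le (le_inf le_sup_left le_sup_left) (le_inf ?_ ?_)) ?_
  · exact (span_singleton_le_span_singleton.mpr (dvd_mul_right z b)).trans le_sup_right
  · exact (span_singleton_le_span_singleton.mpr (dvd_mul_left b z)).trans le_sup_right
  rintro p ⟨hpz, hpb⟩
  obtain ⟨v, hv, _, hq, rfl⟩ := Submodule.mem_sup.mp hpz
  obtain ⟨q, rfl⟩ := mem_span_singleton'.mp hq
  have hzq : q * z ∈ I ⊔ span {b} := by
    simpa using sub_mem hpb (mem_sup_left hv)
  obtain ⟨w, hw, _, hh, hwh⟩ := Submodule.mem_sup.mp hzq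
  obtain ⟨h, rfl⟩ := mem_span_singleton'.mp hh
  have hφwh : φ w + φ h * b = 0 := by
    simpa [hz, hb] using congrArg φ hwh
  obtain ⟨t, ht⟩ := mem_span_singleton'.mp (hφ h)
  have hsplit : v + q * z = (v + (w - (1 - z) * φ w)) + (t + φ h) * (z * b) := by
    linear_combination -hwh + (1 - z) * hφwh - b * ht
  rw [hsplit]
  exact add_mem (mem_sup_left (add_mem hv (sub_mem hw (hI w hw))))
    (mem_sup_right (mul_mem_left _ _ (mem_span_singleton_self _)))

open MvPolynomial Ideal

namespace MvPolynomial

variable {σ R : Type*} [CommRing R]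

lemma exists_eq_X_sub_C_of_eq_X_or_eq_one_sub_X {j : σ} {y : MvPolynomial σ (ZMod 2)}
    (hy : y = X j ∨ y = 1 - X j) : ∃ c, y = X j - C c := by
  rcases hy with rfl | rfl
  · exact ⟨0, by simp⟩
  · refine ⟨1, ?_⟩
    rw [C_1]
    linear_combination (1 - X j) * CharTwo.two_eq_zero (R := MvPolynomial σ (ZMod 2))

variable [DecidableEq σ]

noncomputable def substConst (j : σ) (c : R) : MvPolynomial σ R →ₐ[R] MvPolynomial σ R :=
  aeval (Function.update X j (C c))

@[simp] lemma substConst_X_self (j : σ) (c : R) : substConst j c (X j) = C c := by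
  simp [substConst]

lemma substConst_X_of_ne {i j : σ} (c : R) (h : i ≠ j) : substConst j c (X i) = X i := by
  simp [substConst, h]

lemma substConst_X_sub_C (j : σ) (c : R) : substConst j c (X j - C c) = 0 := by
  simp

lemma sub_substConst_mem_span (j : σ) (c : R) (p : MvPolynomial σ R) :
    p - substConst j c p ∈ span {X j - C c} := by
  rw [← Ideal.Quotient.eq]
  let π := Ideal.Quotient.mkₐ R (span {X j - C c})
  suffices π = π.comp (substConst j c) from congrArg (· p) this
  refine algHom_ext fun i => ?_
  by_cases hij : i = j
  · subst hij
    simp [π, Ideal.Quotient.mkₐ_eq_mk, Ideal.Quotient.eq]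
  · simp [substConst_X_of_ne c hij]

lemma substConst_of_ne {i j : σ} (c : R) (h : i ≠ j) {y : MvPolynomial σ R}
    (hy : y = X i ∨ y = 1 - X i) : substConst j c y = y := by
  rcases hy with rfl | rfl <;> simp [substConst_X_of_ne c h]

lemma substConst_prod_of_notMem {j : σ} (c : R) {τ : Finset σ} (hj : j ∉ τ)
    {y : σ → MvPolynomial σ R} (hy : ∀ i ∈ τ, y i = X i ∨ y i = 1 - X i) :
    substConst j c (∏ i ∈ τ, y i) = ∏ i ∈ τ, y i := by
  rw [map_prod]
  exact Finset.prod_congr rfl fun i hi => substConst_of_ne c (ne_of_mem_of_not_mem hi hj) (hy i hi)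

-- `substConst j c y` is either `0`, or `1` with `y = 1 - (X j - C c)`.
lemma dvd_one_sub_mul_substConst {j : σ} (c : ZMod 2) {y : MvPolynomial σ (ZMod 2)}
    (hy : y = X j ∨ y = 1 - X j) : y ∣ (1 - (X j - C c)) * substConst j c y := by
  obtain rfl | rfl : c = 0 ∨ c = 1 := by revert c; decide
  all_goals rcases hy with rfl | rfl <;> simp
  exact ⟨-1, by linear_combination CharTwo.two_eq_zero (R := MvPolynomial σ (ZMod 2))⟩

end MvPolynomial

variable {n : ℕ}

lemma IsPseudoMonomial.dvd_one_sub_mul_substConst {g : MvPolynomial (Fin n) (ZMod 2)}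
    (hg : IsPseudoMonomial g) (j : Fin n) (c : ZMod 2) :
    g ∣ (1 - (X j - C c)) * substConst j c g := by
  obtain ⟨τ, y, hy, rfl⟩ := hg
  by_cases hj : j ∈ τ
  · have hm := substConst_prod_of_notMem c (Finset.notMem_erase j τ)
      fun i hi => hy i (Finset.mem_of_mem_erase hi)
    rw [← Finset.mul_prod_erase τ y hj, map_mul, hm, ← mul_assoc]
    exact mul_dvd_mul_right (MvPolynomial.dvd_one_sub_mul_substConst c (hy j hj)) _
  · rw [substConst_prod_of_notMem c hj hy]
    exact dvd_mul_left _ _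

lemma IsPseudoMonomialIdeal.one_sub_mul_substConst_mem
    {J : Ideal (MvPolynomial (Fin n) (ZMod 2))} (hJ : IsPseudoMonomialIdeal J) (j : Fin n)
    (c : ZMod 2) {g : MvPolynomial (Fin n) (ZMod 2)} (hg : g ∈ J) :
    (1 - (X j - C c)) * substConst j c g ∈ J := by
  obtain ⟨G, hG, rfl⟩ := hJ
  induction hg using Submodule.span_induction with
  | mem g hg => exact mem_of_dvd _ ((hG g hg).dvd_one_sub_mul_substConst j c) (subset_span hg)
  | zero => simp
  | add a b _ _ ha hb => simpa [mul_add] using add_mem ha hb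
  | smul a g _ hg => simpa [mul_left_comm] using mul_mem_left _ (substConst j c a) hg

theorem stmt_13 (n : ℕ) (J : Ideal (MvPolynomial (Fin n) (ZMod 2)))
    (hJ : IsPseudoMonomialIdeal J) (σ : Finset (Fin n))
    (z : Fin n → MvPolynomial (Fin n) (ZMod 2))
    (hz : ∀ i ∈ σ, z i = MvPolynomial.X i ∨ z i = 1 - MvPolynomial.X i) :
    J ⊔ Ideal.span {∏ i ∈ σ, z i} = ⨅ i ∈ σ, (J ⊔ Ideal.span {z i}) := by
  induction σ using Finset.induction_on with
  | empty => simp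
  | @insert j s hj ih =>
    have hzs : ∀ i ∈ s, z i = X i ∨ z i = 1 - X i :=
      fun i hi => hz i (Finset.mem_insert_of_mem hi)
    obtain ⟨c, hc⟩ :=
      exists_eq_X_sub_C_of_eq_X_or_eq_one_sub_X (hz j (Finset.mem_insert_self j s))
    rw [Finset.prod_insert hj, Finset.iInf_insert, ← ih hzs, hc]
    exact J.sup_span_singleton_mul_eq_inf (substConst j c).toRingHom (substConst_X_sub_C j c)
      (sub_substConst_mem_span j c) (substConst_prod_of_notMem c hj hzs)
      fun g hg => hJ.one_sub_mul_substConst_mem j c hg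
end

section
/- For a ∈ {0,1,*}^n, define V_a = {v ∈ {0,1}^n : v_i = a_i whenever a_i ≠ *} and p_a = ⟨x_i - a_i : a_i ≠ *⟩ ⊆ 𝔽₂[x_1,...,x_n]. Then for a code C ⊆ {0,1}^n with neural ideal J_C = ⟨ρ_v : v ∉ C⟩, we have J_C ⊆ p_a if and only if V_a ⊆ C. -/
/-- `V_a`: the set of points compatible with the word `a ∈ {0,1,*}ⁿ` (`none` = `*`). -/
def Va {n : ℕ} (a : Fin n → Option (ZMod 2)) : Set (Fin n → ZMod 2) :=
  {v | ∀ i b, a i = some b → v i = b}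

/-- `p_a`: the prime ideal associated to the word `a ∈ {0,1,*}ⁿ`. -/
noncomputable def pa {n : ℕ} (a : Fin n → Option (ZMod 2)) :
    Ideal (MvPolynomial (Fin n) (ZMod 2)) :=
  Ideal.span {f | ∃ i b, a i = some b ∧ f = MvPolynomial.X i - MvPolynomial.C b}

lemma rho_eval_self {n : ℕ} (v : Fin n → ZMod 2) : MvPolynomial.eval v (rho v) = 1 := by
  rw [rho, map_prod]
  apply Finset.prod_eq_one
  intro i _
  by_cases h : v i = 1
  · simp [h]
  · have h0 : v i = 0 := by
      have := (by decide : ∀ x : ZMod 2, x = 0 ∨ x = 1)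
      rcases this (v i) with h0 | h1
      · exact h0
      · exact absurd h1 h
    simp [h, h0]

theorem stmt_15 (n : ℕ) (C : Set (Fin n → ZMod 2)) (a : Fin n → Option (ZMod 2)) :
    Ideal.span (rho '' {v | v ∉ C}) ≤ pa a ↔ Va a ⊆ C := by
  constructor
  · intro hle v hv
    by_contra hvC
    have hmem : rho v ∈ pa a := hle (Ideal.subset_span ⟨v, hvC, rfl⟩)
    -- eval at v kills pa a
    have hz : MvPolynomial.eval v (rho v) = 0 := by
      refine Submodule.span_induction ?_ ?_ ?_ ?_ hmem
      · rintro f ⟨i, b, hab, rfl⟩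
        simp [hv i b hab]
      · simp
      · intro f g _ _ hf hg; simp [hf, hg]
      · intro r g _ hg; simp [smul_eq_mul, hg]
    rw [rho_eval_self] at hz
    exact one_ne_zero hz
  · intro hVC
    rw [Ideal.span_le]
    rintro _ ⟨v, hv, rfl⟩
    have hvV : v ∉ Va a := fun h => hv (hVC h)
    simp only [Va, Set.mem_setOf_eq, not_forall] at hvV
    obtain ⟨i, b, hab, hne⟩ := hvV
    have hfac : (if v i = 1 then MvPolynomial.X i else 1 - MvPolynomial.X i :
        MvPolynomial (Fin n) (ZMod 2)) ∈ pa a := by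
      have hgen : MvPolynomial.X i - MvPolynomial.C b ∈ pa a :=
        Ideal.subset_span ⟨i, b, hab, rfl⟩
      by_cases h : v i = 1
      · have hb : b = 0 := by
          have := (by decide : ∀ x : ZMod 2, x = 0 ∨ x = 1)
          rcases this b with h0 | h1
          · exact h0
          · exact absurd (h.trans h1.symm) hne
        simpa [h, hb] using hgen
      · have hb : b = 1 := by
          have hd := (by decide : ∀ x : ZMod 2, x = 0 ∨ x = 1)
          have hv0 : v i = 0 := by
            rcases hd (v i) with h0 | h1
            · exact h0
            · exact absurd h1 h
          rcases hd b with h0 | h1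
          · exact absurd (hv0.trans h0.symm) hne
          · exact h1
        have : (1 : MvPolynomial (Fin n) (ZMod 2)) - MvPolynomial.X i =
            -(MvPolynomial.X i - MvPolynomial.C 1) := by
          simp [sub_eq_add_neg]
        rw [if_neg h, this]
        rw [hb] at hgen
        exact (pa a).neg_mem hgen
    have hdvd : (if v i = 1 then MvPolynomial.X i else 1 - MvPolynomial.X i :
        MvPolynomial (Fin n) (ZMod 2)) ∣ rho v :=
      Finset.dvd_prod_of_mem _ (Finset.mem_univ i)
    obtain ⟨g, hg⟩ := hdvd
    rw [rho] at hg ⊢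
    rw [hg]
    exact Ideal.mul_mem_right _ _ hfac
end
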